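/- Let θ = (α, α*, γ, μ) be dual feasible, let (β°, β₀°, ξ°, ξ*°, ε°) be primal feasible, let θ° be any point of ℝ^{2n+k₁+k₂}, and assume the zero duality gap identity ½‖β°‖² + C(νε° + (1/n)Σᵢ(ξ°ᵢ + ξ*°ᵢ)) = −f(θ°). Then ½ ‖β(θ) − β°‖² ≤ f(θ) − f(θ°). -/

import Mathlib

/-!
Writing `g = β(θ)`, one has `Mᵀθ = -g`, so `f(θ) = ½‖g‖² + lᵀθ` and `-gᵀβ° = θᵀ(Mβ°)`.
Weak duality bounds `θᵀ(Mβ° - l)` by the primal penalty `C(νε° + (1/n)Σ(ξ° + ξ*°))`: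
each coordinate of `Mβ° - l` is controlled by a primal constraint, and the dual constraints
make the weighted sum of these bounds collapse (the `β₀°` terms cancel because `Σ(α - α*) = 0`).
Expanding `½‖g - β°‖² = ½‖g‖² - gᵀβ° + ½‖β°‖²` and using the zero duality gap gives the claim.
-/

open Matrix BigOperators

/-- Index type for the dual variables θ = (α, α*, γ, μ). -/
abbrev dIdx (n k₁ k₂ : ℕ) := (Fin n ⊕ Fin n) ⊕ (Fin k₁ ⊕ Fin k₂)

/-- The stacked matrix M = (X; −X; A; −Γ). -/
noncomputable def Mmat {n p k₁ k₂ : ℕ} (X : Matrix (Fin n) (Fin p) ℝ)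
    (A : Matrix (Fin k₁) (Fin p) ℝ) (Γ : Matrix (Fin k₂) (Fin p) ℝ) :
    Matrix (dIdx n k₁ k₂) (Fin p) ℝ :=
  Matrix.fromRows (Matrix.fromRows X (-X)) (Matrix.fromRows A (-Γ))

/-- The linear term l = (y, −y, b, −d). -/
noncomputable def lvec {n k₁ k₂ : ℕ} (y : Fin n → ℝ) (b : Fin k₁ → ℝ)
    (d : Fin k₂ → ℝ) : dIdx n k₁ k₂ → ℝ :=
  Sum.elim (Sum.elim y (-y)) (Sum.elim b (-d))

/-- The dual objective f(θ) = ½ θᵀ Q̄ θ + lᵀ θ with Q̄ = M Mᵀ. -/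
noncomputable def fObj {n p k₁ k₂ : ℕ} (X : Matrix (Fin n) (Fin p) ℝ)
    (A : Matrix (Fin k₁) (Fin p) ℝ) (Γ : Matrix (Fin k₂) (Fin p) ℝ)
    (y : Fin n → ℝ) (b : Fin k₁ → ℝ) (d : Fin k₂ → ℝ)
    (θ : dIdx n k₁ k₂ → ℝ) : ℝ :=
  (1 / 2) * (θ ⬝ᵥ ((Mmat X A Γ * (Mmat X A Γ)ᵀ) *ᵥ θ)) + lvec y b d ⬝ᵥ θ

/-- β(θ) = −Xᵀ(α − α*) − Aᵀγ + Γᵀμ for θ = (α, α*, γ, μ). -/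
noncomputable def betaOf {n p k₁ k₂ : ℕ} (X : Matrix (Fin n) (Fin p) ℝ)
    (A : Matrix (Fin k₁) (Fin p) ℝ) (Γ : Matrix (Fin k₂) (Fin p) ℝ)
    (θ : dIdx n k₁ k₂ → ℝ) : Fin p → ℝ :=
  -(Xᵀ *ᵥ fun i => θ (.inl (.inl i)) - θ (.inl (.inr i)))
    - Aᵀ *ᵥ (fun j => θ (.inr (.inl j))) + Γᵀ *ᵥ (fun j => θ (.inr (.inr j)))

/-- Dual feasibility of θ = (α, α*, γ, μ). -/
def DualFeasible {n k₁ k₂ : ℕ} (C ν : ℝ) (θ : dIdx n k₁ k₂ → ℝ) : Prop :=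
  (∀ i : Fin n, 0 ≤ θ (.inl (.inl i)) ∧ θ (.inl (.inl i)) ≤ C / n) ∧
  (∀ i : Fin n, 0 ≤ θ (.inl (.inr i)) ∧ θ (.inl (.inr i)) ≤ C / n) ∧
  (∑ i : Fin n, (θ (.inl (.inl i)) + θ (.inl (.inr i))) ≤ C * ν) ∧
  (∑ i : Fin n, (θ (.inl (.inl i)) - θ (.inl (.inr i))) = 0) ∧
  (∀ j : Fin k₁, 0 ≤ θ (.inr (.inl j)))

/-- Primal feasibility of (β, β₀, ξ, ξ*, ε). -/
def PrimalFeasible {n p k₁ k₂ : ℕ} (X : Matrix (Fin n) (Fin p) ℝ)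
    (A : Matrix (Fin k₁) (Fin p) ℝ) (Γ : Matrix (Fin k₂) (Fin p) ℝ)
    (y : Fin n → ℝ) (b : Fin k₁ → ℝ) (d : Fin k₂ → ℝ)
    (β : Fin p → ℝ) (β₀ : ℝ) (ξ ξs : Fin n → ℝ) (ε : ℝ) : Prop :=
  (∀ i, X i ⬝ᵥ β + β₀ - y i ≤ ε + ξ i) ∧
  (∀ i, y i - X i ⬝ᵥ β - β₀ ≤ ε + ξs i) ∧
  (∀ i, 0 ≤ ξ i) ∧ (∀ i, 0 ≤ ξs i) ∧ 0 ≤ ε ∧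
  (∀ j, (A *ᵥ β) j ≤ b j) ∧ Γ *ᵥ β = d

theorem dotProduct_mul_transpose_mulVec {m k R : Type*} [Fintype m] [Fintype k]
    [CommSemiring R] (M : Matrix m k R) (v : m → R) :
    v ⬝ᵥ ((M * Mᵀ) *ᵥ v) = (Mᵀ *ᵥ v) ⬝ᵥ (Mᵀ *ᵥ v) := by
  rw [← mulVec_mulVec, dotProduct_mulVec, mulVec_transpose]

theorem weighted_eps_insensitive_le {a as u v ε ξ ξs β₀ : ℝ} (ha : 0 ≤ a) (has : 0 ≤ as)
    (h : u + β₀ - v ≤ ε + ξ) (hs : v - u - β₀ ≤ ε + ξs) :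
    a * (u - v) + as * (v - u) ≤ a * (ε + ξ - β₀) + as * (ε + ξs + β₀) := by
  have h₁ : a * (u - v) ≤ a * (ε + ξ - β₀) := mul_le_mul_of_nonneg_left (by linarith) ha
  have h₂ : as * (v - u) ≤ as * (ε + ξs + β₀) := mul_le_mul_of_nonneg_left (by linarith) has
  linarith

section

variable {n p k₁ k₂ : ℕ} (X : Matrix (Fin n) (Fin p) ℝ) (A : Matrix (Fin k₁) (Fin p) ℝ)
  (Γ : Matrix (Fin k₂) (Fin p) ℝ)

theorem Mmat_transpose_mulVec (θ : dIdx n k₁ k₂ → ℝ) :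
    (Mmat X A Γ)ᵀ *ᵥ θ = -betaOf X A Γ θ := by
  funext j
  simp only [betaOf, Mmat, mulVec, dotProduct, transpose_apply, Fintype.sum_sum_type,
    fromRows_apply_inl, fromRows_apply_inr, Pi.neg_apply, Pi.add_apply, Pi.sub_apply,
    Matrix.neg_apply, mul_sub, neg_mul, Finset.sum_sub_distrib, Finset.sum_neg_distrib]
  ring

theorem fObj_eq_betaOf (y : Fin n → ℝ) (b : Fin k₁ → ℝ) (d : Fin k₂ → ℝ) (θ : dIdx n k₁ k₂ → ℝ) :
    fObj X A Γ y b d θ =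
      1 / 2 * (betaOf X A Γ θ ⬝ᵥ betaOf X A Γ θ) + lvec y b d ⬝ᵥ θ := by
  rw [fObj, dotProduct_mul_transpose_mulVec, Mmat_transpose_mulVec, neg_dotProduct,
    dotProduct_neg, neg_neg]

theorem betaOf_dotProduct (θ : dIdx n k₁ k₂ → ℝ) (β : Fin p → ℝ) :
    betaOf X A Γ θ ⬝ᵥ β = -(θ ⬝ᵥ (Mmat X A Γ *ᵥ β)) := by
  rw [dotProduct_mulVec, ← mulVec_transpose, Mmat_transpose_mulVec, neg_dotProduct, neg_neg]

theorem dotProduct_Mmat_mulVec_sub_lvec (y : Fin n → ℝ) (b : Fin k₁ → ℝ) (d : Fin k₂ → ℝ)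
    (θ : dIdx n k₁ k₂ → ℝ) (β : Fin p → ℝ) :
    θ ⬝ᵥ (Mmat X A Γ *ᵥ β - lvec y b d) =
      ∑ i, (θ (.inl (.inl i)) * (X i ⬝ᵥ β - y i) + θ (.inl (.inr i)) * (y i - X i ⬝ᵥ β))
        + ∑ j, θ (.inr (.inl j)) * ((A *ᵥ β) j - b j)
        + ∑ j, θ (.inr (.inr j)) * (d j - (Γ *ᵥ β) j) := by
  simp only [dotProduct, Fintype.sum_sum_type, Mmat, lvec, Pi.sub_apply, fromRows_mulVec,
    Sum.elim_inl, Sum.elim_inr, neg_mulVec, Pi.neg_apply, mulVec, neg_sub_neg,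
    ← Finset.sum_add_distrib]
  ring

theorem dotProduct_Mmat_mulVec_le {y : Fin n → ℝ} {b : Fin k₁ → ℝ} {d : Fin k₂ → ℝ} {C ν : ℝ}
    {θ : dIdx n k₁ k₂ → ℝ} (hθ : DualFeasible C ν θ) {β : Fin p → ℝ} {β₀ ε : ℝ}
    {ξ ξs : Fin n → ℝ} (hprim : PrimalFeasible X A Γ y b d β β₀ ξ ξs ε) :
    θ ⬝ᵥ (Mmat X A Γ *ᵥ β) ≤
      lvec y b d ⬝ᵥ θ + C * (ν * ε + 1 / (n : ℝ) * ∑ i, (ξ i + ξs i)) := by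
  obtain ⟨hα, hαs, hsum, hbal, hγ⟩ := hθ
  obtain ⟨hup, hlow, hξ, hξs, hε, hA, hΓ⟩ := hprim
  set α : Fin n → ℝ := fun i => θ (.inl (.inl i))
  set αs : Fin n → ℝ := fun i => θ (.inl (.inr i))
  have hsample : ∑ i, (α i * (X i ⬝ᵥ β - y i) + αs i * (y i - X i ⬝ᵥ β)) ≤
      ∑ i, (α i * (ε + ξ i - β₀) + αs i * (ε + ξs i + β₀)) :=
    Finset.sum_le_sum fun i _ => weighted_eps_insensitive_le (hα i).1 (hαs i).1 (hup i) (hlow i)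
  have hcollapse : ∑ i, (α i * (ε + ξ i - β₀) + αs i * (ε + ξs i + β₀)) =
      ε * ∑ i, (α i + αs i) + ∑ i, (α i * ξ i + αs i * ξs i) - β₀ * ∑ i, (α i - αs i) := by
    simp only [Finset.mul_sum, ← Finset.sum_add_distrib, ← Finset.sum_sub_distrib]
    exact Finset.sum_congr rfl fun i _ => by ring
  have hε_bound : ε * ∑ i, (α i + αs i) ≤ ε * (C * ν) := mul_le_mul_of_nonneg_left hsum hε
  have hξ_bound : ∑ i, (α i * ξ i + αs i * ξs i) ≤ C / n * ∑ i, (ξ i + ξs i) := by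
    rw [Finset.mul_sum]
    refine Finset.sum_le_sum fun i _ => ?_
    have h₁ := mul_le_mul_of_nonneg_right (hα i).2 (hξ i)
    have h₂ := mul_le_mul_of_nonneg_right (hαs i).2 (hξs i)
    linarith
  have hineq : ∑ j, θ (.inr (.inl j)) * ((A *ᵥ β) j - b j) ≤ 0 :=
    Finset.sum_nonpos fun j _ => mul_nonpos_of_nonneg_of_nonpos (hγ j) (by linarith [hA j])
  have heq : ∑ j, θ (.inr (.inr j)) * (d j - (Γ *ᵥ β) j) = 0 := by simp [hΓ]
  have hsplit := dotProduct_Mmat_mulVec_sub_lvec X A Γ y b d θ β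
  rw [dotProduct_sub, dotProduct_comm θ (lvec y b d)] at hsplit
  have hpenalty : C * (ν * ε + 1 / (n : ℝ) * ∑ i, (ξ i + ξs i)) =
      ε * (C * ν) + C / n * ∑ i, (ξ i + ξs i) := by ring
  rw [hbal, mul_zero, sub_zero] at hcollapse
  linarith

end

theorem stmt16_general (n p k₁ k₂ : ℕ) (X : Matrix (Fin n) (Fin p) ℝ) (y : Fin n → ℝ)
    (A : Matrix (Fin k₁) (Fin p) ℝ) (Γ : Matrix (Fin k₂) (Fin p) ℝ)
    (b : Fin k₁ → ℝ) (d : Fin k₂ → ℝ) (C ν : ℝ)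
    (θ : dIdx n k₁ k₂ → ℝ) (hθ : DualFeasible C ν θ)
    (βopt : Fin p → ℝ) (β₀opt : ℝ) (ξopt ξsopt : Fin n → ℝ) (εopt : ℝ)
    (hprim : PrimalFeasible X A Γ y b d βopt β₀opt ξopt ξsopt εopt)
    (θopt : dIdx n k₁ k₂ → ℝ)
    (hgap : (1 / 2) * (βopt ⬝ᵥ βopt)
        + C * (ν * εopt + (1 / (n : ℝ)) * ∑ i, (ξopt i + ξsopt i)) =
          -(fObj X A Γ y b d θopt)) :
    (1 / 2) * ((betaOf X A Γ θ - βopt) ⬝ᵥ (betaOf X A Γ θ - βopt)) ≤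
      fObj X A Γ y b d θ - fObj X A Γ y b d θopt := by
  have hweak := dotProduct_Mmat_mulVec_le X A Γ hθ hprim
  have hexpand : (betaOf X A Γ θ - βopt) ⬝ᵥ (betaOf X A Γ θ - βopt) =
      betaOf X A Γ θ ⬝ᵥ betaOf X A Γ θ - 2 * (betaOf X A Γ θ ⬝ᵥ βopt) + βopt ⬝ᵥ βopt := by
    rw [sub_dotProduct, dotProduct_sub, dotProduct_sub, dotProduct_comm βopt]
    ring
  rw [hexpand, betaOf_dotProduct X A Γ θ βopt, fObj_eq_betaOf]
  linarith

/-- for any dual feasible θ, primal feasible (β°, β₀°, ξ°, ξ*°, ε°)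
and θ° satisfying the zero-duality-gap identity, ½‖β(θ) − β°‖² ≤ f(θ) − f(θ°). -/
theorem stmt16 (n p k₁ k₂ : ℕ) (X : Matrix (Fin n) (Fin p) ℝ) (y : Fin n → ℝ)
    (A : Matrix (Fin k₁) (Fin p) ℝ) (Γ : Matrix (Fin k₂) (Fin p) ℝ)
    (b : Fin k₁ → ℝ) (d : Fin k₂ → ℝ) (C ν : ℝ)
    (hC : 0 < C) (hν : ν ∈ Set.Ioc (0 : ℝ) 1)
    (θ : dIdx n k₁ k₂ → ℝ) (hθ : DualFeasible C ν θ)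
    (βopt : Fin p → ℝ) (β₀opt : ℝ) (ξopt ξsopt : Fin n → ℝ) (εopt : ℝ)
    (hprim : PrimalFeasible X A Γ y b d βopt β₀opt ξopt ξsopt εopt)
    (θopt : dIdx n k₁ k₂ → ℝ)
    (hgap : (1 / 2) * (βopt ⬝ᵥ βopt)
        + C * (ν * εopt + (1 / (n : ℝ)) * ∑ i, (ξopt i + ξsopt i)) =
          -(fObj X A Γ y b d θopt)) :
    (1 / 2) * ((betaOf X A Γ θ - βopt) ⬝ᵥ (betaOf X A Γ θ - βopt)) ≤
      fObj X A Γ y b d θ - fObj X A Γ y b d θopt :=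
  stmt16_general n p k₁ k₂ X y A Γ b d C ν θ hθ βopt β₀opt ξopt ξsopt εopt hprim θopt hgap
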